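/- arXiv:2005.05212 — 5 statements merged into one kernel-verified Lean document; each statement's English description precedes it below -/
import Mathlib

section
/- Let X be a measurable space, ν = (ν_N) a sequence of probability measures on X, and f : X → [0, ∞) a bounded measurable function. Let F_ν be the filter on X generated by the measurable sets J with lim_{N→∞} ν_N(J) = 1. Then lim_{N→∞} ∫_X f dν_N = 0 if and only if f converges to 0 along the filter F_ν. -/
open MeasureTheory Filter Topology

/-- The filter on `X` generated by the measurable sets of `ν`-density one. -/
def densityFilter {X : Type*} [MeasurableSpace X] (ν : ℕ → Measure X) : Filter X :=
  Filter.generate {J | MeasurableSet J ∧ Tendsto (fun N => ν N J) atTop (𝓝 1)}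

/-!
If `∫ f dν_N → 0`, Markov's inequality shows that each sublevel set `{f < ε}` has
`ν`-density one, so `f → 0` along the density filter. Conversely, every member of the density
filter contains a measurable set `J` with `ν_N(Jᶜ) → 0` (density-one sets are stable under
finite intersections), and splitting `∫ f dν_N` over `J` and `Jᶜ` bounds it by
`ε + M ν_N(Jᶜ)` when `f < ε` on `J`.
-/

section DensityFilter

variable {X : Type*} [MeasurableSpace X] {ν : ℕ → Measure X}

lemma tendsto_measure_compl_iff [∀ N, IsProbabilityMeasure (ν N)] {J : Set X}
    (hJ : MeasurableSet J) :
    Tendsto (fun N => ν N Jᶜ) atTop (𝓝 0) ↔ Tendsto (fun N => ν N J) atTop (𝓝 1) := by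
  have one_sub {u : ℕ → ENNReal} {a : ENNReal} (hu : Tendsto u atTop (𝓝 a)) :
      Tendsto (fun N => 1 - u N) atTop (𝓝 (1 - a)) :=
    ((ENNReal.continuous_sub_left ENNReal.one_ne_top).tendsto a).comp hu
  constructor
  · intro h
    simpa [← prob_compl_eq_one_sub hJ.compl] using one_sub h
  · intro h
    simpa [← prob_compl_eq_one_sub hJ] using one_sub h

lemma exists_measurableSet_subset_of_mem_densityFilter [∀ N, IsProbabilityMeasure (ν N)]
    {S : Set X} (hS : S ∈ densityFilter ν) :
    ∃ J ⊆ S, MeasurableSet J ∧ Tendsto (fun N => ν N Jᶜ) atTop (𝓝 0) := by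
  induction hS with
  | basic hS => exact ⟨_, subset_rfl, hS.1, (tendsto_measure_compl_iff hS.1).2 hS.2⟩
  | univ => exact ⟨Set.univ, subset_rfl, MeasurableSet.univ, by simp⟩
  | superset _ hST ih =>
    obtain ⟨J, hJS, hJ, hJc⟩ := ih
    exact ⟨J, hJS.trans hST, hJ, hJc⟩
  | inter _ _ ihS ihT =>
    obtain ⟨J, hJS, hJ, hJc⟩ := ihS
    obtain ⟨K, hKT, hK, hKc⟩ := ihT
    refine ⟨J ∩ K, Set.inter_subset_inter hJS hKT, hJ.inter hK, ?_⟩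
    refine tendsto_of_tendsto_of_tendsto_of_le_of_le tendsto_const_nhds
      (by simpa using hJc.add hKc) (fun N => zero_le) (fun N => ?_)
    rw [Set.compl_inter]
    exact measure_union_le _ _

lemma mem_densityFilter_of_tendsto_measure_compl [∀ N, IsProbabilityMeasure (ν N)] {J : Set X}
    (hJ : MeasurableSet J) (hJc : Tendsto (fun N => ν N Jᶜ) atTop (𝓝 0)) :
    J ∈ densityFilter ν :=
  mem_generate_of_mem ⟨hJ, (tendsto_measure_compl_iff hJ).1 hJc⟩

end DensityFilter

section Integral

variable {X : Type*} [MeasurableSpace X]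

lemma tendsto_measure_setOf_le_of_tendsto_integral {ν : ℕ → Measure X}
    [∀ N, IsFiniteMeasure (ν N)] {f : X → ℝ} (hpos : ∀ x, 0 ≤ f x)
    (hint : ∀ N, Integrable f (ν N)) (h : Tendsto (fun N => ∫ x, f x ∂ν N) atTop (𝓝 0))
    {ε : ℝ} (hε : 0 < ε) :
    Tendsto (fun N => ν N {x | ε ≤ f x}) atTop (𝓝 0) := by
  have markov (N : ℕ) : (ν N).real {x | ε ≤ f x} ≤ (∫ x, f x ∂ν N) / ε := by
    rw [le_div_iff₀' hε]
    exact mul_meas_ge_le_integral_of_nonneg (ae_of_all _ hpos) (hint N) ε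
  have hreal : Tendsto (fun N => (ν N).real {x | ε ≤ f x}) atTop (𝓝 0) :=
    tendsto_of_tendsto_of_tendsto_of_le_of_le tendsto_const_nhds (by simpa using h.div_const ε)
      (fun N => measureReal_nonneg) markov
  rw [← ENNReal.toReal_zero] at hreal
  exact (ENNReal.tendsto_toReal_iff (fun N => measure_ne_top _ _) ENNReal.zero_ne_top).1 hreal

lemma integral_le_add_mul_measureReal_compl {μ : Measure X} [IsProbabilityMeasure μ]
    {f : X → ℝ} {J : Set X} {ε M : ℝ} (hJ : MeasurableSet J) (hint : Integrable f μ)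
    (hε : 0 ≤ ε) (hfJ : ∀ x ∈ J, f x ≤ ε) (hbdd : ∀ x, f x ≤ M) :
    ∫ x, f x ∂μ ≤ ε + M * μ.real Jᶜ := by
  have hJ_le : ∫ x in J, f x ∂μ ≤ ε :=
    calc ∫ x in J, f x ∂μ ≤ ∫ _ in J, ε ∂μ :=
          setIntegral_mono_on hint.integrableOn integrableOn_const hJ hfJ
      _ = μ.real J * ε := by rw [setIntegral_const, smul_eq_mul]
      _ ≤ ε := mul_le_of_le_one_left hε measureReal_le_one
  have hJc_le : ∫ x in Jᶜ, f x ∂μ ≤ M * μ.real Jᶜ :=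
    calc ∫ x in Jᶜ, f x ∂μ ≤ ∫ _ in Jᶜ, M ∂μ :=
          setIntegral_mono_on hint.integrableOn integrableOn_const hJ.compl fun x _ => hbdd x
      _ = M * μ.real Jᶜ := by rw [setIntegral_const, smul_eq_mul, mul_comm]
  rw [← integral_add_compl hJ hint]
  linarith

end Integral

/-- Koopman–von Neumann lemma for measure sequences: for a bounded measurable
nonnegative function `f`, the integrals `∫ f dν_N` tend to `0` iff `f` tends to `0`
along the filter generated by the sets of `ν`-density one. -/
theorem koopman_von_neumann_measure_sequences
    {X : Type*} [MeasurableSpace X] (ν : ℕ → Measure X)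
    (hν : ∀ N, IsProbabilityMeasure (ν N)) (f : X → ℝ)
    (hmeas : Measurable f) (hpos : ∀ x, 0 ≤ f x) (M : ℝ) (hbdd : ∀ x, f x ≤ M) :
    Tendsto (fun N => ∫ x, f x ∂ν N) atTop (𝓝 0) ↔
      Tendsto f (densityFilter ν) (𝓝 0) := by
  have hint (N : ℕ) : Integrable f (ν N) :=
    .of_bound hmeas.aestronglyMeasurable M
      (ae_of_all _ fun x => (Real.norm_of_nonneg (hpos x)).trans_le (hbdd x))
  constructor
  · intro h
    refine tendsto_order.2 ⟨fun a ha => .of_forall fun x => ha.trans_le (hpos x), fun ε hε => ?_⟩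
    have hsublevel : MeasurableSet {x | f x < ε} := measurableSet_lt hmeas measurable_const
    refine mem_densityFilter_of_tendsto_measure_compl hsublevel ?_
    simpa only [Set.compl_ofPred, not_lt] using
      tendsto_measure_setOf_le_of_tendsto_integral hpos hint h hε
  · intro h
    refine tendsto_order.2 ⟨fun a ha => .of_forall fun N => ha.trans_le (integral_nonneg hpos),
      fun ε hε => ?_⟩
    obtain ⟨J, hJS, hJ, hJc⟩ :=
      exists_measurableSet_subset_of_mem_densityFilter (h (Iio_mem_nhds (half_pos hε)))
    have hMJc : Tendsto (fun N => M * (ν N).real Jᶜ) atTop (𝓝 0) := by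
      simpa [measureReal_def] using ((ENNReal.tendsto_toReal ENNReal.zero_ne_top).comp hJc).const_mul M
    filter_upwards [hMJc.eventually (gt_mem_nhds (half_pos hε))] with N hN
    calc ∫ x, f x ∂ν N ≤ ε / 2 + M * (ν N).real Jᶜ :=
          integral_le_add_mul_measureReal_compl hJ (hint N) (half_pos hε).le
            (fun x hx => (hJS hx).le) hbdd
      _ < ε := by linarith
end

section
/- Let G be a locally compact abelian group with Pontryagin dual H, and let ν = (ν_N) be a sequence of probability measures on H. For g ∈ G, the following are equivalent: (i) the limit c_ν(g) := lim_{N→∞} ∫_H ⟨g,h⟩ dν_N(h) exists and |c_ν(g)| = 1; (ii) the function h ↦ ⟨g,h⟩ converges along the filter F_ν generated by the ν-density-1 sets. Moreover, if they hold, the filter limit equals c_ν(g). -/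
open MeasureTheory Filter Topology

/-! A measurable set lies in `densityFilter ν` exactly when the `ν_N`-mass of its complement
tends to `0`, so convergence along `densityFilter ν` is convergence in probability. For `f` and
`c` on the unit sphere, `‖f - c‖² = 2 - 2⟪f, c⟫`, hence `∫ ‖f - c‖² dν_N → 0` as soon as
`∫ f dν_N → c`, and Markov's inequality gives convergence in probability. Conversely,
convergence in probability of a bounded function forces its integrals to converge. -/

section DensityFilter

variable {X : Type*} [MeasurableSpace X] {ν : ℕ → Measure X}

theorem tendsto_measureReal_setOf_le_of_tendsto_integral {u : X → ℝ} (hu0 : 0 ≤ u)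
    (hu : ∀ N, Integrable u (ν N)) (h : Tendsto (fun N => ∫ x, u x ∂ν N) atTop (𝓝 0))
    {ε : ℝ} (hε : 0 < ε) :
    Tendsto (fun N => (ν N).real {x | ε ≤ u x}) atTop (𝓝 0) := by
  refine squeeze_zero (fun _ => measureReal_nonneg) (fun N => ?_) (by simpa using h.const_mul ε⁻¹)
  rw [le_inv_mul_iff₀ hε]
  exact mul_meas_ge_le_integral_of_nonneg (ae_of_all _ hu0) (hu N) ε

theorem integral_le_add_mul_measureReal_setOf_le {μ : Measure X} [IsProbabilityMeasure μ]
    {u : X → ℝ} (hu : Measurable u) (hu0 : 0 ≤ u) {B : ℝ} (huB : ∀ x, u x ≤ B)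
    {ε : ℝ} (hε : 0 ≤ ε) :
    ∫ x, u x ∂μ ≤ ε + B * μ.real {x | ε ≤ u x} := by
  have hS : MeasurableSet {x | ε ≤ u x} := measurableSet_le measurable_const hu
  have hint : Integrable u μ :=
    .of_bound hu.aestronglyMeasurable B (ae_of_all _ fun x => by
      rw [Real.norm_of_nonneg (hu0 x)]; exact huB x)
  calc ∫ x, u x ∂μ ≤ ∫ x, (ε + {x | ε ≤ u x}.indicator (fun _ => B) x) ∂μ := by
        refine integral_mono hint ((integrable_const ε).add
          ((integrable_const B).indicator hS)) fun x => ?_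
        by_cases hx : ε ≤ u x
        · simpa [Set.indicator_of_mem (show x ∈ {x | ε ≤ u x} from hx)] using
            (huB x).trans (le_add_of_nonneg_left hε)
        · simp [Set.indicator_of_notMem (show x ∉ {x | ε ≤ u x} from hx), (not_le.1 hx).le]
    _ = ε + B * μ.real {x | ε ≤ u x} := by
        rw [integral_add (integrable_const ε) ((integrable_const B).indicator hS),
          integral_indicator_const B hS]
        simp [mul_comm]

variable [∀ N, IsProbabilityMeasure (ν N)]

theorem tendsto_integral_of_tendsto_measureReal_setOf_le {u : X → ℝ} (hu : Measurable u)
    (hu0 : 0 ≤ u) {B : ℝ} (huB : ∀ x, u x ≤ B)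
    (h : ∀ ε > 0, Tendsto (fun N => (ν N).real {x | ε ≤ u x}) atTop (𝓝 0)) :
    Tendsto (fun N => ∫ x, u x ∂ν N) atTop (𝓝 0) := by
  refine tendsto_order.2 ⟨fun a ha => .of_forall fun N => ha.trans_le (integral_nonneg hu0),
    fun δ hδ => ?_⟩
  have hsmall : ∀ᶠ N in atTop, B * (ν N).real {x | δ / 2 ≤ u x} < δ / 2 :=
    (tendsto_order.1 (by simpa using (h (δ / 2) (by positivity)).const_mul B)).2 _
      (by positivity)
  filter_upwards [hsmall] with N hN
  linarith [integral_le_add_mul_measureReal_setOf_le (μ := ν N) hu hu0 huB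
    (show 0 ≤ δ / 2 by positivity)]

theorem tendsto_measure_iff_tendsto_measureReal_compl {J : Set X} (hJ : MeasurableSet J) :
    Tendsto (fun N => ν N J) atTop (𝓝 1) ↔ Tendsto (fun N => (ν N).real Jᶜ) atTop (𝓝 0) := by
  rw [← ENNReal.tendsto_toReal_iff (fun N => measure_ne_top _ _) ENNReal.one_ne_top]
  simp only [measureReal_compl hJ, probReal_univ, ← measureReal_def, ENNReal.toReal_one]
  constructor <;> intro h <;> simpa using (tendsto_const_nhds (x := (1 : ℝ))).sub h

theorem tendsto_measureReal_compl_of_mem_densityFilter {J : Set X} (hJ : J ∈ densityFilter ν) :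
    Tendsto (fun N => (ν N).real Jᶜ) atTop (𝓝 0) := by
  induction hJ with
  | basic hJ => exact (tendsto_measure_iff_tendsto_measureReal_compl hJ.1).1 hJ.2
  | univ => simp
  | superset _ hst ih =>
    exact squeeze_zero (fun _ => measureReal_nonneg)
      (fun N => measureReal_mono (Set.compl_subset_compl.2 hst)) ih
  | inter _ _ hs ht =>
    refine squeeze_zero (fun _ => measureReal_nonneg) (fun N => ?_) (by simpa using hs.add ht)
    rw [Set.compl_inter]
    exact measureReal_union_le _ _

theorem mem_densityFilter_iff {J : Set X} (hJ : MeasurableSet J) :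
    J ∈ densityFilter ν ↔ Tendsto (fun N => (ν N).real Jᶜ) atTop (𝓝 0) :=
  ⟨tendsto_measureReal_compl_of_mem_densityFilter, fun h =>
    mem_generate_of_mem ⟨hJ, (tendsto_measure_iff_tendsto_measureReal_compl hJ).2 h⟩⟩

instance densityFilter.neBot : (densityFilter ν).NeBot := by
  refine ⟨fun h => ?_⟩
  have := tendsto_measureReal_compl_of_mem_densityFilter (h ▸ mem_bot : ∅ ∈ densityFilter ν)
  simp at this

theorem tendsto_densityFilter_iff {E : Type*} [PseudoMetricSpace E] {f : X → E}
    (hf : StronglyMeasurable f) {c : E} :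
    Tendsto f (densityFilter ν) (𝓝 c) ↔
      ∀ ε > 0, Tendsto (fun N => (ν N).real {x | ε ≤ dist (f x) c}) atTop (𝓝 0) := by
  refine Metric.tendsto_nhds.trans (forall₂_congr fun ε _ => ?_)
  have hball : MeasurableSet {x | dist (f x) c < ε} :=
    measurableSet_lt (hf.dist stronglyMeasurable_const).measurable measurable_const
  simp only [Filter.Eventually, mem_densityFilter_iff hball, Set.compl_ofPred, not_lt]

theorem tendsto_integral_of_tendsto_densityFilter {E : Type*} [NormedAddCommGroup E]
    [NormedSpace ℝ E] [CompleteSpace E] {f : X → E} (hf : StronglyMeasurable f) {B : ℝ}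
    (hfB : ∀ x, ‖f x‖ ≤ B) {c : E} (h : Tendsto f (densityFilter ν) (𝓝 c)) :
    Tendsto (fun N => ∫ x, f x ∂ν N) atTop (𝓝 c) := by
  have hint : ∀ N, Integrable f (ν N) := fun N =>
    .of_bound hf.aestronglyMeasurable B (ae_of_all _ hfB)
  have hdist : Tendsto (fun N => ∫ x, dist (f x) c ∂ν N) atTop (𝓝 0) :=
    tendsto_integral_of_tendsto_measureReal_setOf_le (hf.dist stronglyMeasurable_const).measurable
      (fun _ => dist_nonneg) (fun x => (dist_le_norm_add_norm _ _).trans (by grw [hfB x]))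
      ((tendsto_densityFilter_iff hf).1 h)
  refine tendsto_iff_norm_sub_tendsto_zero.2 <| squeeze_zero (fun _ => norm_nonneg _)
    (fun N => ?_) hdist
  calc ‖∫ x, f x ∂ν N - c‖ = ‖∫ x, (f x - c) ∂ν N‖ := by
        rw [integral_sub (hint N) (integrable_const c), integral_const, probReal_univ, one_smul]
    _ ≤ ∫ x, dist (f x) c ∂ν N := by
        simpa only [dist_eq_norm] using norm_integral_le_integral_norm _

section InnerProductSpace

variable {E : Type*} [NormedAddCommGroup E] [InnerProductSpace ℝ E] [CompleteSpace E]

theorem integral_norm_sub_sq_of_norm_eq_one {μ : Measure X} [IsProbabilityMeasure μ]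
    {f : X → E} (hf : Integrable f μ) (hf1 : ∀ x, ‖f x‖ = 1) {c : E} (hc : ‖c‖ = 1) :
    ∫ x, ‖f x - c‖ ^ 2 ∂μ = 2 - 2 * inner ℝ (∫ x, f x ∂μ) c := by
  have hinner : Integrable (fun x => inner ℝ c (f x)) μ := hf.const_inner c
  have hpt : ∀ x, ‖f x - c‖ ^ 2 = 2 - 2 * inner ℝ c (f x) := fun x => by
    rw [norm_sub_sq_real, hf1, hc, real_inner_comm c]; ring
  simp_rw [hpt]
  rw [integral_sub (integrable_const _) (hinner.const_mul 2), integral_const_mul,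
    integral_inner hf, real_inner_comm c]
  simp

theorem tendsto_densityFilter_of_tendsto_integral {f : X → E} (hf : StronglyMeasurable f)
    (hf1 : ∀ x, ‖f x‖ = 1) {c : E} (hc : ‖c‖ = 1)
    (h : Tendsto (fun N => ∫ x, f x ∂ν N) atTop (𝓝 c)) :
    Tendsto f (densityFilter ν) (𝓝 c) := by
  have hint : ∀ N, Integrable f (ν N) := fun N =>
    .of_bound hf.aestronglyMeasurable 1 (ae_of_all _ fun x => (hf1 x).le)
  have hsq_bound : ∀ x, ‖‖f x - c‖ ^ 2‖ ≤ 4 := fun x => by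
    have : ‖f x - c‖ ≤ 2 := (norm_sub_le _ _).trans (by rw [hf1 x, hc]; norm_num)
    rw [Real.norm_of_nonneg (by positivity)]
    nlinarith [norm_nonneg (f x - c)]
  have hsq : Tendsto (fun N => ∫ x, ‖f x - c‖ ^ 2 ∂ν N) atTop (𝓝 0) := by
    simp_rw [integral_norm_sub_sq_of_norm_eq_one (hint _) hf1 hc]
    simpa [real_inner_self_eq_norm_sq, hc] using
      ((h.inner (tendsto_const_nhds (x := c))).const_mul (2 : ℝ)).const_sub (2 : ℝ)
  refine (tendsto_densityFilter_iff hf).2 fun ε hε => ?_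
  have hsets : ∀ x, ε ≤ dist (f x) c ↔ ε ^ 2 ≤ ‖f x - c‖ ^ 2 := fun x => by
    rw [dist_eq_norm, pow_le_pow_iff_left₀ hε.le (norm_nonneg _) two_ne_zero]
  simp_rw [hsets]
  exact tendsto_measureReal_setOf_le_of_tendsto_integral (fun _ => sq_nonneg _)
    (fun N => .of_bound ((hf.sub stronglyMeasurable_const).norm.pow 2).aestronglyMeasurable 4
      (ae_of_all _ hsq_bound)) hsq (by positivity)

end InnerProductSpace

end DensityFilter

theorem c_nu_filter_equivalent_general
    {G : Type*} [CommGroup G] [TopologicalSpace G]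
    [MeasurableSpace (PontryaginDual G)] [BorelSpace (PontryaginDual G)]
    (ν : ℕ → Measure (PontryaginDual G)) (hν : ∀ N, IsProbabilityMeasure (ν N))
    (g : G) :
    ((∃ c : ℂ, ‖c‖ = 1 ∧
        Tendsto (fun N => ∫ h, ((h g : ℂ)) ∂ν N) atTop (𝓝 c)) ↔
      (∃ c : ℂ, Tendsto (fun h : PontryaginDual G => ((h g : ℂ)))
        (densityFilter ν) (𝓝 c))) ∧
    (∀ c : ℂ, ‖c‖ = 1 →
      Tendsto (fun N => ∫ h, ((h g : ℂ)) ∂ν N) atTop (𝓝 c) →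
      Tendsto (fun h : PontryaginDual G => ((h g : ℂ))) (densityFilter ν) (𝓝 c)) := by
  have hcont : Continuous fun h : G →ₜ* Circle => (h g : ℂ) :=
    continuous_subtype_val.comp (continuous_eval_const g)
  have hf : StronglyMeasurable fun h : PontryaginDual G => (h g : ℂ) :=
    Continuous.stronglyMeasurable (α := PontryaginDual G) hcont
  have hf1 : ∀ h : PontryaginDual G, ‖(h g : ℂ)‖ = 1 := fun h => Circle.norm_coe _
  refine ⟨⟨fun ⟨c, hc, h⟩ => ⟨c, ?_⟩, fun ⟨c, h⟩ => ⟨c, ?_, ?_⟩⟩, fun c hc h => ?_⟩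
  · exact tendsto_densityFilter_of_tendsto_integral hf hf1 hc h
  · simpa [hf1, eq_comm] using h.norm
  · exact tendsto_integral_of_tendsto_densityFilter hf (fun h => (hf1 h).le) h
  · exact tendsto_densityFilter_of_tendsto_integral hf hf1 hc h

/-- For a measure sequence `ν` on the dual group `H = Ĝ` and `g ∈ G`, the limit
`c_ν(g) = lim_N ∫ ⟨g,h⟩ dν_N(h)` exists with `|c_ν(g)| = 1` iff `h ↦ ⟨g,h⟩` converges
along the density filter `F_ν`; moreover, in that case the two limits agree. -/
theorem c_nu_filter_equivalent
    {G : Type*} [CommGroup G] [TopologicalSpace G] [IsTopologicalGroup G]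
    [LocallyCompactSpace G]
    [MeasurableSpace (PontryaginDual G)] [BorelSpace (PontryaginDual G)]
    (ν : ℕ → Measure (PontryaginDual G)) (hν : ∀ N, IsProbabilityMeasure (ν N))
    (g : G) :
    ((∃ c : ℂ, ‖c‖ = 1 ∧
        Tendsto (fun N => ∫ h, ((h g : ℂ)) ∂ν N) atTop (𝓝 c)) ↔
      (∃ c : ℂ, Tendsto (fun h : PontryaginDual G => ((h g : ℂ)))
        (densityFilter ν) (𝓝 c))) ∧
    (∀ c : ℂ, ‖c‖ = 1 →
      Tendsto (fun N => ∫ h, ((h g : ℂ)) ∂ν N) atTop (𝓝 c) →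
      Tendsto (fun h : PontryaginDual G => ((h g : ℂ))) (densityFilter ν) (𝓝 c)) :=
  c_nu_filter_equivalent_general ν hν g
end

section
/- Let (G, H) be a pair of dual locally compact abelian groups, ν a measure sequence on H with c_ν defined everywhere, and μ a discrete Borel probability measure on G. If c_ν(g₀ g₁⁻¹) = 1 for every pair of atoms g₀, g₁ of μ, then lim_{N→∞} ∫_H |μ̂(h)|² dν_N(h) = 1. -/
/-!
Writing `μ = ∑ wₓ δₓ`, one has `|μ̂(h)|² = ∑_{x,y} wₓ w_y h(x y⁻¹)`, a double series
dominated by the summable weights `wₓ w_y`. Integrating it termwise against `ν_N` and letting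
`N → ∞` by dominated convergence for series gives `∑ wₓ w_y c(x y⁻¹)`, and `c(x y⁻¹) = 1`
whenever both weights are positive, so the limit is `(∑ wₓ)² = 1`.
-/

open MeasureTheory Filter Topology
open ComplexConjugate

section WeightedSums

variable {ι : Type*} {w : ι → ℝ}

lemma norm_real_smul_le_abs {E : Type*} [SeminormedAddCommGroup E] [NormedSpace ℝ E] (a : ℝ)
    {z : E} (hz : ‖z‖ ≤ 1) : ‖a • z‖ ≤ |a| := by
  simpa [norm_smul] using mul_le_of_le_one_right (abs_nonneg a) hz

lemma norm_tsum_smul_sq_eq_tsum (hw : Summable w) {z : ι → ℂ} (hz : ∀ i, ‖z i‖ ≤ 1) :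
    ((‖∑' i, w i • z i‖ ^ 2 : ℝ) : ℂ) =
      ∑' p : ι × ι, (w p.1 * w p.2) • (z p.1 * conj (z p.2)) := by
  have hsum : ∀ u : ι → ℂ, (∀ i, ‖u i‖ ≤ 1) → Summable fun i => ‖w i • u i‖ := fun u hu =>
    hw.abs.of_nonneg_of_le (fun _ => norm_nonneg _) fun i => norm_real_smul_le_abs _ (hu i)
  have hconj : ∀ i, ‖conj (z i)‖ ≤ 1 := fun i => (Complex.norm_conj _).trans_le (hz i)
  rw [Complex.ofReal_pow, ← Complex.mul_conj', Complex.conj_tsum,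
    tsum_mul_tsum_of_summable_norm (hsum z hz) (by simpa using hsum _ hconj)]
  refine tsum_congr fun p => ?_
  simp only [Complex.real_smul, map_mul, Complex.conj_ofReal, Complex.ofReal_mul]
  ring

lemma tendsto_tsum_smul_of_tendsto_one [Countable ι] (hw : Summable w) {b : ℕ → ι → ℂ}
    (hb : ∀ N i, ‖b N i‖ ≤ 1) (hlim : ∀ i, w i ≠ 0 → Tendsto (b · i) atTop (𝓝 1)) :
    Tendsto (fun N => ∑' i, w i • b N i) atTop (𝓝 (∑' i, (w i : ℂ))) := by
  refine tendsto_tsum_of_dominated_convergence hw.abs (fun i => ?_)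
    (Eventually.of_forall fun N i => norm_real_smul_le_abs _ (hb N i))
  by_cases hi : w i = 0
  · simp [hi]
  · simpa [Complex.real_smul] using (hlim i hi).const_smul (w i)

variable {X : Type*} [MeasurableSpace X]

lemma integral_tsum_smul_of_norm_le_one [Countable ι] (hw : Summable w) (ν : Measure X)
    [IsFiniteMeasure ν] {f : ι → X → ℂ} (hf : ∀ i, AEStronglyMeasurable (f i) ν)
    (hf1 : ∀ i x, ‖f i x‖ ≤ 1) :
    ∫ x, ∑' i, w i • f i x ∂ν = ∑' i, w i • ∫ x, f i x ∂ν := by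
  have hint : ∀ i, Integrable (fun x => w i • f i x) ν := fun i =>
    (Integrable.of_bound (hf i) 1 (Eventually.of_forall (hf1 i))).smul (w i)
  rw [← integral_tsum_of_summable_integral_norm hint]
  · simp only [integral_smul]
  · refine (hw.abs.mul_left (ν.real Set.univ)).of_nonneg_of_le
      (fun _ => integral_nonneg fun _ => norm_nonneg _) fun i => ?_
    calc ∫ x, ‖w i • f i x‖ ∂ν ≤ ∫ _, |w i| ∂ν :=
          integral_mono (hint i).norm (integrable_const _)
            fun x => norm_real_smul_le_abs _ (hf1 i x)
      _ = ν.real Set.univ * |w i| := by rw [integral_const, smul_eq_mul]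

theorem tendsto_integral_norm_tsum_smul_sq [Countable ι] (hw : HasSum w 1)
    (ν : ℕ → Measure X) [∀ N, IsProbabilityMeasure (ν N)] {φ : ι → X → ℂ}
    (hφm : ∀ i, StronglyMeasurable (φ i)) (hφ : ∀ i x, ‖φ i x‖ ≤ 1)
    (hlim : ∀ i j, w i ≠ 0 → w j ≠ 0 →
      Tendsto (fun N => ∫ x, φ i x * conj (φ j x) ∂ν N) atTop (𝓝 1)) :
    Tendsto (fun N => ∫ x, ‖∑' i, w i • φ i x‖ ^ 2 ∂ν N) atTop (𝓝 1) := by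
  have hprod : ∀ p : ι × ι, ∀ x, ‖φ p.1 x * conj (φ p.2 x)‖ ≤ 1 := fun p x => by
    simpa [norm_mul] using mul_le_one₀ (hφ p.1 x) (norm_nonneg _) (hφ p.2 x)
  have hw2 : HasSum (fun p : ι × ι => w p.1 * w p.2) 1 := by
    simpa using hw.mul hw (summable_mul_of_summable_norm hw.summable.norm hw.summable.norm)
  have hexpand : ∀ N, ((∫ x, ‖∑' i, w i • φ i x‖ ^ 2 ∂ν N : ℝ) : ℂ) =
      ∑' p : ι × ι, (w p.1 * w p.2) • ∫ x, φ p.1 x * conj (φ p.2 x) ∂ν N := fun N => by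
    rw [← integral_complex_ofReal,
      ← integral_tsum_smul_of_norm_le_one hw2.summable _ (fun p => ?_) hprod]
    · simp only [norm_tsum_smul_sq_eq_tsum hw.summable (hφ · _)]
    · exact ((hφm p.1).mul (hφm p.2).star).aestronglyMeasurable
  have hbound : ∀ N (p : ι × ι), ‖∫ x, φ p.1 x * conj (φ p.2 x) ∂ν N‖ ≤ 1 := fun N p => by
    simpa using norm_integral_le_of_norm_le_const (μ := ν N) (Eventually.of_forall (hprod p))
  have hconv := tendsto_tsum_smul_of_tendsto_one hw2.summable hbound fun p hp =>
    hlim p.1 p.2 (left_ne_zero_of_mul hp) (right_ne_zero_of_mul hp)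
  rw [← Complex.ofReal_tsum, hw2.tsum_eq] at hconv
  exact tendsto_ofReal_iff.mp (by simpa only [hexpand] using hconv)

end WeightedSums

section Discrete

variable {α : Type*} [MeasurableSpace α] [MeasurableSingletonClass α] {μ : Measure α} {s : Set α}

lemma integral_eq_tsum_of_ae_mem_countable {E : Type*} [NormedAddCommGroup E] [NormedSpace ℝ E]
    [CompleteSpace E] (hs : s.Countable) (hμs : ∀ᵐ x ∂μ, x ∈ s) {f : α → E}
    (hf : Integrable f μ) : ∫ x, f x ∂μ = ∑' x : s, μ.real {(x : α)} • f x := by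
  conv_lhs => rw [← Measure.restrict_eq_self_of_ae_mem hμs]
  exact setIntegral_countable f hs hf.integrableOn

lemma hasSum_measureReal_singleton_of_ae_mem [IsProbabilityMeasure μ] (hs : s.Countable)
    (hμs : ∀ᵐ x ∂μ, x ∈ s) : HasSum (fun x : s => μ.real {(x : α)}) 1 := by
  have htotal := integral_eq_tsum_of_ae_mem_countable hs hμs (integrable_const (1 : ℝ))
  simp only [integral_const, probReal_univ, smul_eq_mul, mul_one] at htotal
  have hsum : Summable fun x : s => μ.real {(x : α)} := by
    by_contra hns
    rw [tsum_eq_zero_of_not_summable hns] at htotal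
    exact one_ne_zero htotal
  exact htotal ▸ hsum.hasSum

end Discrete

lemma PontryaginDual.continuous_apply {G : Type*} [Monoid G] [TopologicalSpace G] (g : G) :
    Continuous fun χ : PontryaginDual G => χ g :=
  (continuous_eval_const (F := C(G, Circle)) g).comp
    (ContinuousMonoidHom.isEmbedding_toContinuousMap G Circle).continuous

lemma PontryaginDual.coe_apply_mul_inv {G : Type*} [CommGroup G] [TopologicalSpace G]
    (χ : PontryaginDual G) (g₀ g₁ : G) : (χ (g₀ * g₁⁻¹) : ℂ) = χ g₀ * conj (χ g₁ : ℂ) := by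
  rw [_root_.map_mul, _root_.map_inv, Circle.coe_mul, Circle.coe_inv_eq_conj]

theorem discrete_atoms_extremal_general
    {G : Type*} [CommGroup G] [TopologicalSpace G]
    [MeasurableSpace G] [BorelSpace G]
    [MeasurableSingletonClass G]
    [MeasurableSpace (PontryaginDual G)] [BorelSpace (PontryaginDual G)]
    (ν : ℕ → Measure (PontryaginDual G)) (hν : ∀ N, IsProbabilityMeasure (ν N))
    (c : G → ℂ)
    (hgood : ∀ g : G, Tendsto (fun N => ∫ h, ((h g : ℂ)) ∂ν N) atTop (𝓝 (c g)))
    (μ : Measure G) [IsProbabilityMeasure μ]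
    (hdiscrete : ∃ s : Set G, s.Countable ∧ μ s = 1)
    (hatoms : ∀ g₀ g₁ : G, μ {g₀} ≠ 0 → μ {g₁} ≠ 0 → c (g₀ * g₁⁻¹) = 1) :
    Tendsto (fun N => ∫ h, ‖∫ g, ((h g : ℂ)) ∂μ‖ ^ 2 ∂ν N) atTop (𝓝 1) := by
  obtain ⟨s, hs, hμs⟩ := hdiscrete
  have hae : ∀ᵐ g ∂μ, g ∈ s := (mem_ae_iff_prob_eq_one hs.measurableSet).2 hμs
  have hfourier : ∀ h : PontryaginDual G,
      ∫ g, (h g : ℂ) ∂μ = ∑' x : s, μ.real {(x : G)} • (h x : ℂ) := fun h =>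
    integral_eq_tsum_of_ae_mem_countable hs hae <|
      .of_bound (continuous_subtype_val.comp (map_continuous h)).aestronglyMeasurable 1
        (Eventually.of_forall fun g => (Circle.norm_coe _).le)
  have := hν
  have := hs.to_subtype
  simp only [hfourier]
  refine tendsto_integral_norm_tsum_smul_sq (hasSum_measureReal_singleton_of_ae_mem hs hae) ν
    (fun x => (continuous_subtype_val.comp
      (PontryaginDual.continuous_apply (x : G))).stronglyMeasurable)
    (fun x h => (Circle.norm_coe _).le) fun x y hx hy => ?_
  have hatom : ∀ x : s, μ.real {(x : G)} ≠ 0 → μ {(x : G)} ≠ 0 := fun x hx hμx =>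
    hx (by simp [measureReal_def, hμx])
  simpa only [PontryaginDual.coe_apply_mul_inv, hatoms x y (hatom x hx) (hatom y hy)]
    using hgood (x * (y : G)⁻¹)

/-- Wiener's lemma, part (3): if `μ` is a discrete Borel probability measure on `G`
(it is concentrated on a countable set) and `c_ν(g₀ g₁⁻¹) = 1` for every pair of atoms
`g₀, g₁` of `μ`, then `lim_N ∫ |μ̂|² dν_N = 1`. -/
theorem discrete_atoms_extremal
    {G : Type*} [CommGroup G] [TopologicalSpace G] [IsTopologicalGroup G]
    [LocallyCompactSpace G] [MeasurableSpace G] [BorelSpace G]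
    [MeasurableSingletonClass G]
    [MeasurableSpace (PontryaginDual G)] [BorelSpace (PontryaginDual G)]
    (ν : ℕ → Measure (PontryaginDual G)) (hν : ∀ N, IsProbabilityMeasure (ν N))
    (c : G → ℂ)
    (hgood : ∀ g : G, Tendsto (fun N => ∫ h, ((h g : ℂ)) ∂ν N) atTop (𝓝 (c g)))
    (μ : Measure G) [IsProbabilityMeasure μ]
    (hdiscrete : ∃ s : Set G, s.Countable ∧ μ s = 1)
    (hatoms : ∀ g₀ g₁ : G, μ {g₀} ≠ 0 → μ {g₁} ≠ 0 → c (g₀ * g₁⁻¹) = 1) :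
    Tendsto (fun N => ∫ h, ‖∫ g, ((h g : ℂ)) ∂μ‖ ^ 2 ∂ν N) atTop (𝓝 1) :=
  discrete_atoms_extremal_general ν hν c hgood μ hdiscrete hatoms
end

section
/- Let H be an abelian group, M ⊆ H a subsemigroup such that for every h ∈ H either h ∈ M or h⁻¹ ∈ M, and let (T_m)_{m∈M} be a semigroup action of M on a Hilbert space X by contractions. Set X₁ := { x ∈ X : ‖T_m x‖ = ‖T_m* x‖ = ‖x‖ for all m ∈ M }. Then X₁ = { x ∈ X : T_m* T_m x = T_m T_m* x = x for all m ∈ M }, X₁ is a closed subspace of X invariant under all T_m and all T_m*, and the restriction of each T_m to X₁ is unitary on X₁. -/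
open Filter Topology ContinuousLinearMap

local notation "⟪" x ", " y "⟫" => @inner ℂ _ _ x y

private lemma sznf_key {X : Type*} [NormedAddCommGroup X] [InnerProductSpace ℂ X]
    [CompleteSpace X] (T : X →L[ℂ] X) (hT : ‖T‖ ≤ 1) (x : X) :
    ‖T x‖ = ‖x‖ ↔ adjoint T (T x) = x := by
  constructor
  · intro h
    have hadj : ‖adjoint T‖ ≤ 1 := by
      rw [LinearIsometryEquiv.norm_map]; exact hT
    have h1 : ‖adjoint T (T x)‖ ≤ ‖x‖ := by
      calc ‖adjoint T (T x)‖ ≤ ‖adjoint T‖ * ‖T x‖ := le_opNorm _ _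
        _ ≤ 1 * ‖x‖ := by rw [h]; exact mul_le_mul_of_nonneg_right hadj (norm_nonneg _)
        _ = ‖x‖ := one_mul _
    have h2 : RCLike.re ⟪adjoint T (T x), x⟫ = ‖x‖ ^ 2 := by
      rw [adjoint_inner_left, @inner_self_eq_norm_sq ℂ, h]
    have h3 : ‖adjoint T (T x) - x‖ ^ 2 ≤ 0 := by
      rw [@norm_sub_sq ℂ, h2]
      nlinarith [norm_nonneg (adjoint T (T x)), norm_nonneg x]
    have := pow_eq_zero_iff (n := 2) (by norm_num) |>.mp
      (le_antisymm h3 (by positivity))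
    rwa [norm_sub_eq_zero_iff] at this
  · intro h
    have : ⟪T x, T x⟫ = ⟪x, x⟫ := by
      rw [← adjoint_inner_left, h]
    have := congrArg RCLike.re this
    rw [@inner_self_eq_norm_sq ℂ, @inner_self_eq_norm_sq ℂ] at this
    nlinarith [norm_nonneg (T x), norm_nonneg x]

private lemma sznf_inv {X : Type*} [NormedAddCommGroup X] [InnerProductSpace ℂ X]
    [CompleteSpace X] {H : Type*} [CommGroup H] (M : Subsemigroup H)
    (hM : ∀ h : H, h ∈ M ∨ h⁻¹ ∈ M)
    (T : M → X →L[ℂ] X)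
    (hmul : ∀ m n : M, T (m * n) = (T m).comp (T n))
    (hcontr : ∀ m : M, ‖T m‖ ≤ 1)
    (x : X) (hx : ∀ m : M, ‖T m x‖ = ‖x‖ ∧ ‖adjoint (T m) x‖ = ‖x‖)
    (n : M) :
    ∀ m : M, ‖T m (T n x)‖ = ‖T n x‖ ∧ ‖adjoint (T m) (T n x)‖ = ‖T n x‖ := by
  intro m
  have hTn : ‖T n x‖ = ‖x‖ := (hx n).1
  have hmn : ‖T m (T n x)‖ = ‖x‖ := by
    calc ‖T m (T n x)‖ = ‖T (m * n) x‖ := by rw [hmul m n]; rfl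
      _ = ‖x‖ := (hx (m * n)).1
  refine ⟨by rw [hmn, hTn], ?_⟩
  rcases hM ((n : H) * (m : H)⁻¹) with hk | hk
  · set k : M := ⟨(n : H) * (m : H)⁻¹, hk⟩ with hkdef
    have hn : m * k = n := by
      apply Subtype.ext
      show (m : H) * ((n : H) * (m : H)⁻¹) = (n : H)
      rw [mul_comm ((n : H)) ((m : H)⁻¹), ← mul_assoc, mul_inv_cancel, one_mul]
    have h1 : ‖T m (T k x)‖ = ‖T k x‖ := by
      have he : T m (T k x) = T n x := by rw [← hn, hmul m k]; rfl
      rw [he, hTn, (hx k).1]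
    have h2 : adjoint (T m) (T m (T k x)) = T k x := (sznf_key _ (hcontr m) _).mp h1
    have h3 : adjoint (T m) (T n x) = T k x := by
      rw [← hn, hmul m k]; exact h2
    rw [h3, (hx k).1, hTn]
  · set k : M := ⟨((n : H) * (m : H)⁻¹)⁻¹, hk⟩ with hkdef
    have hm : n * k = m := by
      apply Subtype.ext
      show (n : H) * ((n : H) * (m : H)⁻¹)⁻¹ = (m : H)
      rw [mul_inv_rev, inv_inv, mul_comm ((m : H)) ((n : H)⁻¹), ← mul_assoc,
        mul_inv_cancel, one_mul]
    have hfix : T k (adjoint (T k) x) = x := by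
      have := (sznf_key (adjoint (T k))
        (by rw [LinearIsometryEquiv.norm_map]; exact hcontr k) x).mp (hx k).2
      rwa [adjoint_adjoint] at this
    have h1 : T m (adjoint (T k) x) = T n x := by
      rw [← hm, hmul n k]
      show T n (T k (adjoint (T k) x)) = T n x
      rw [hfix]
    have h2 : ‖T m (adjoint (T k) x)‖ = ‖adjoint (T k) x‖ := by
      rw [h1, hTn, (hx k).2]
    have h3 : adjoint (T m) (T m (adjoint (T k) x)) = adjoint (T k) x :=
      (sznf_key _ (hcontr m) _).mp h2
    rw [← h1, h3, h2, (hx k).2]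

/-- The unitary part of the Sz.-Nagy–Foiaş decomposition.  Let `M` be a subsemigroup of
an abelian group `H` with `h ∈ M` or `h⁻¹ ∈ M` for every `h`, acting on a Hilbert space
`X` by contractions `T_m`.  Then
`X₁ = {x : ‖T_m x‖ = ‖T_m* x‖ = ‖x‖ for all m}` equals
`{x : T_m* T_m x = T_m T_m* x = x for all m}`; it is a closed subspace, invariant under
all `T_m` and `T_m*`, and each `T_m` restricts to a unitary (surjective isometric)
operator on `X₁`. -/
theorem sz_nagy_foias_unitary_part
    {X : Type*} [NormedAddCommGroup X] [InnerProductSpace ℂ X] [CompleteSpace X]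
    {H : Type*} [CommGroup H] (M : Subsemigroup H)
    (hM : ∀ h : H, h ∈ M ∨ h⁻¹ ∈ M)
    (T : M → X →L[ℂ] X)
    (hmul : ∀ m n : M, T (m * n) = (T m).comp (T n))
    (hcontr : ∀ m : M, ‖T m‖ ≤ 1) :
    ({x : X | ∀ m : M, ‖T m x‖ = ‖x‖ ∧ ‖adjoint (T m) x‖ = ‖x‖} =
        {x : X | ∀ m : M, adjoint (T m) (T m x) = x ∧ T m (adjoint (T m) x) = x}) ∧
      (∃ S : Submodule ℂ X,
        (S : Set X) = {x : X | ∀ m : M, ‖T m x‖ = ‖x‖ ∧ ‖adjoint (T m) x‖ = ‖x‖}) ∧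
      IsClosed {x : X | ∀ m : M, ‖T m x‖ = ‖x‖ ∧ ‖adjoint (T m) x‖ = ‖x‖} ∧
      (∀ m : M, ∀ x ∈ {x : X | ∀ m : M, ‖T m x‖ = ‖x‖ ∧ ‖adjoint (T m) x‖ = ‖x‖},
        T m x ∈ {x : X | ∀ m : M, ‖T m x‖ = ‖x‖ ∧ ‖adjoint (T m) x‖ = ‖x‖} ∧
        adjoint (T m) x ∈ {x : X | ∀ m : M, ‖T m x‖ = ‖x‖ ∧ ‖adjoint (T m) x‖ = ‖x‖}) ∧
      (∀ m : M,
        Set.BijOn (T m) {x : X | ∀ m : M, ‖T m x‖ = ‖x‖ ∧ ‖adjoint (T m) x‖ = ‖x‖}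
          {x : X | ∀ m : M, ‖T m x‖ = ‖x‖ ∧ ‖adjoint (T m) x‖ = ‖x‖}) := by
  have hadjc : ∀ m : M, ‖adjoint (T m)‖ ≤ 1 := fun m => by
    rw [LinearIsometryEquiv.norm_map]; exact hcontr m
  -- the key iff for the adjoint version
  have keyadj : ∀ (m : M) (x : X), ‖adjoint (T m) x‖ = ‖x‖ ↔ T m (adjoint (T m) x) = x := by
    intro m x
    have := sznf_key (adjoint (T m)) (hadjc m) x
    rwa [adjoint_adjoint] at this
  have hset : {x : X | ∀ m : M, ‖T m x‖ = ‖x‖ ∧ ‖adjoint (T m) x‖ = ‖x‖} =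
      {x : X | ∀ m : M, adjoint (T m) (T m x) = x ∧ T m (adjoint (T m) x) = x} :=
    Set.ext fun x => forall_congr' fun m =>
      and_congr (sznf_key (T m) (hcontr m) x) (keyadj m x)
  -- the adjoint system
  set S : M → X →L[ℂ] X := fun m => adjoint (T m) with hS
  have hmulS : ∀ m n : M, S (m * n) = (S m).comp (S n) := by
    intro m n
    simp only [hS]
    rw [mul_comm, hmul n m, adjoint_comp]
  have hcontrS : ∀ m : M, ‖S m‖ ≤ 1 := hadjc
  -- invariance
  have hinv : ∀ (n : M) (x : X),
      x ∈ {x : X | ∀ m : M, ‖T m x‖ = ‖x‖ ∧ ‖adjoint (T m) x‖ = ‖x‖} →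
      T n x ∈ {x : X | ∀ m : M, ‖T m x‖ = ‖x‖ ∧ ‖adjoint (T m) x‖ = ‖x‖} :=
    fun n x hx => sznf_inv M hM T hmul hcontr x hx n
  have hinvS : ∀ (n : M) (x : X),
      x ∈ {x : X | ∀ m : M, ‖T m x‖ = ‖x‖ ∧ ‖adjoint (T m) x‖ = ‖x‖} →
      adjoint (T n) x ∈ {x : X | ∀ m : M, ‖T m x‖ = ‖x‖ ∧ ‖adjoint (T m) x‖ = ‖x‖} := by
    intro n x hx
    have hxS : ∀ m : M, ‖S m x‖ = ‖x‖ ∧ ‖adjoint (S m) x‖ = ‖x‖ := by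
      intro m
      refine ⟨(hx m).2, ?_⟩
      simp only [hS]
      rw [adjoint_adjoint]
      exact (hx m).1
    have hout := sznf_inv M hM S hmulS hcontrS x hxS n
    intro m
    refine ⟨?_, (hout m).1⟩
    have := (hout m).2
    simp only [hS] at this ⊢
    rwa [adjoint_adjoint] at this
  refine ⟨hset, ?_, ?_, fun m x hx => ⟨hinv m x hx, hinvS m x hx⟩, ?_⟩
  · refine ⟨{ carrier := {x : X | ∀ m : M, adjoint (T m) (T m x) = x ∧ T m (adjoint (T m) x) = x}
              zero_mem' := fun m => by simp
              add_mem' := by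
                intro a b ha hb m
                simp only [Set.mem_setOf_eq] at ha hb ⊢
                constructor <;> rw [map_add, map_add]
                · rw [(ha m).1, (hb m).1]
                · rw [(ha m).2, (hb m).2]
              smul_mem' := by
                intro c a ha m
                simp only [Set.mem_setOf_eq] at ha ⊢
                constructor <;> rw [map_smul, map_smul]
                · rw [(ha m).1]
                · rw [(ha m).2] }, hset.symm⟩
  · rw [hset]
    have hrw : {x : X | ∀ m : M, adjoint (T m) (T m x) = x ∧ T m (adjoint (T m) x) = x} =
        ⋂ m : M, ({x : X | adjoint (T m) (T m x) = x} ∩ {x : X | T m (adjoint (T m) x) = x}) := by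
      ext x
      simp only [Set.mem_setOf_eq, Set.mem_iInter, Set.mem_inter_iff]
    rw [hrw]
    exact isClosed_iInter fun m =>
      (isClosed_eq ((adjoint (T m)).continuous.comp (T m).continuous) continuous_id).inter
        (isClosed_eq ((T m).continuous.comp (adjoint (T m)).continuous) continuous_id)
  · intro m
    refine ⟨fun x hx => hinv m x hx, ?_, ?_⟩
    · intro a ha b hb hab
      have h1 : adjoint (T m) (T m a) = a := (sznf_key (T m) (hcontr m) a).mp (ha m).1
      have h2 : adjoint (T m) (T m b) = b := (sznf_key (T m) (hcontr m) b).mp (hb m).1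
      rw [← h1, ← h2, hab]
    · intro y hy
      refine ⟨adjoint (T m) y, hinvS m y hy, ?_⟩
      exact (keyadj m y).mp (hy m).2
end

section
/- Let M be an abelian semigroup acting on a Hilbert space X by contractions T_m, let F be an invariant filter on M (for A ∈ F and n ∈ M, both nA and (A:n) = {m : mn ∈ A} belong to F), and let X₂ be the orthogonal complement of X₁ = { x : T_m*T_m x = T_m T_m* x = x for all m }. Suppose X₁ is invariant under the T_m and T_m*, so X₂ is as well. Then for every x ∈ X₂, the family (T_m x) converges weakly to 0 along F. -/
open Filter Topology ContinuousLinearMap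

/-!
Along any ultrafilter `G ≤ F` the bounded family `T m x` has a weak limit `x₀`. Invariance of `F`
makes `‖T m x‖` converge along `F` to its infimum, so `‖T m x‖² - ‖T k (T m x)‖² → 0`, and for a
contraction `‖A† A z - z‖² ≤ ‖z‖² - ‖A z‖²`; hence `T k† T k (T m x) - T m x → 0` in norm, and,
writing `m` as `k * m'`, also `T k T k† (T m x) - T m x → 0`. In the weak limit `x₀` is therefore
fixed by all `T k† T k` and `T k T k†`, i.e. `x₀ ∈ X₁ = unitaryPart T`. Finally
`⟪T m x, x₀⟫ = ⟪x, T m† x₀⟫ = 0` because `X₁` is `T m†`-invariant, so `‖x₀‖² = 0`.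
-/

theorem tendsto_zero_of_norm_sq_le_sub {E ι : Type*} [SeminormedAddCommGroup E] {l : Filter ι}
    {d : ι → E} {a b : ι → ℝ} {L : ℝ} (ha : Tendsto a l (𝓝 L)) (hb : Tendsto b l (𝓝 L))
    (hd : ∀ i, ‖d i‖ ^ 2 ≤ a i - b i) : Tendsto d l (𝓝 0) := by
  have hsq : Tendsto (fun i => ‖d i‖ ^ 2) l (𝓝 0) :=
    squeeze_zero (fun _ => sq_nonneg _) hd (by simpa using ha.sub hb)
  simpa [tendsto_zero_iff_norm_tendsto_zero, Real.sqrt_sq (norm_nonneg _)] using hsq.sqrt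

section Hilbert

variable {𝕜 E : Type*} [RCLike 𝕜] [NormedAddCommGroup E] [InnerProductSpace 𝕜 E]

local notation "⟪" x ", " y "⟫" => inner 𝕜 x y

variable (𝕜) in
theorem exists_tendsto_inner_of_norm_le [CompleteSpace E] {ι : Type*} (G : Ultrafilter ι)
    {u : ι → E} {C : ℝ} (hC : ∀ i, ‖u i‖ ≤ C) :
    ∃ x₀ : E, ∀ y : E, Tendsto (fun i => ⟪u i, y⟫) G (𝓝 ⟪x₀, y⟫) := by
  set g : ι → StrongDual 𝕜 E := fun i => innerSL 𝕜 (u i)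
  have hg : Bornology.IsBounded (Set.range g) :=
    isBounded_iff_forall_norm_le.2 ⟨C, by rintro _ ⟨i, rfl⟩; simpa [g] using hC i⟩
  obtain ⟨f, -, hf⟩ := (isCompact_closure_image_coe_of_bounded hg).ultrafilter_le_nhds
    (G.map fun i => ⇑(g i)) (by
      rw [Ultrafilter.coe_map, le_principal_iff]
      exact mem_map.2 (Eventually.of_forall fun i => subset_closure ⟨g i, ⟨i, rfl⟩, rfl⟩))
  rw [Ultrafilter.coe_map] at hf
  refine ⟨(InnerProductSpace.toDual 𝕜 E).symm (ofTendstoOfBoundedRange f g hf hg), fun y => ?_⟩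
  rw [InnerProductSpace.toDual_symm_apply]
  exact tendsto_pi_nhds.1 hf y

theorem eq_of_tendsto_inner_of_tendsto_apply_sub [CompleteSpace E] {ι : Type*} {l : Filter ι}
    [l.NeBot] {u : ι → E} {x₀ : E} (hu : ∀ y, Tendsto (fun i => ⟪u i, y⟫) l (𝓝 ⟪x₀, y⟫))
    (S : E →L[𝕜] E) (hS : Tendsto (fun i => S (u i) - u i) l (𝓝 0)) : S x₀ = x₀ := by
  refine ext_inner_right 𝕜 fun v => tendsto_nhds_unique ?_ (hu v)
  have hSu : Tendsto (fun i => ⟪S (u i), v⟫) l (𝓝 ⟪S x₀, v⟫) := by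
    simpa only [← adjoint_inner_right] using hu (adjoint S v)
  simpa [inner_sub_left] using hSu.sub ((hS.inner tendsto_const_nhds (y := v)))

theorem norm_adjoint_apply_apply_sub_sq_le {F : Type*} [NormedAddCommGroup F]
    [InnerProductSpace 𝕜 F] [CompleteSpace E] [CompleteSpace F] {A : E →L[𝕜] F} (hA : ‖A‖ ≤ 1)
    (z : E) : ‖adjoint A (A z) - z‖ ^ 2 ≤ ‖z‖ ^ 2 - ‖A z‖ ^ 2 := by
  have hre : RCLike.re ⟪adjoint A (A z), z⟫ = ‖A z‖ ^ 2 := by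
    rw [adjoint_inner_left, inner_self_eq_norm_sq]
  have hle : ‖adjoint A (A z)‖ ≤ ‖A z‖ :=
    (adjoint A).le_of_opNorm_le (by rwa [LinearIsometryEquiv.norm_map]) _ |>.trans_eq (one_mul _)
  rw [@norm_sub_sq 𝕜, hre]
  nlinarith [norm_nonneg (adjoint A (A z))]

end Hilbert

theorem Filter.le_map_mul_left {M : Type*} [Mul M] {F : Filter M} {n : M}
    (hF : ∀ A ∈ F, (fun m => n * m) '' A ∈ F) : F ≤ F.map (fun m => n * m) :=
  fun _ hB => mem_of_superset (hF _ hB) (Set.image_preimage_subset _ _)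

theorem tendsto_norm_apply_iInf {𝕜 X M : Type*} [NontriviallyNormedField 𝕜]
    [NormedAddCommGroup X] [NormedSpace 𝕜 X] [CommSemigroup M] [Nonempty M]
    {T : M → X →L[𝕜] X} (hmulT : ∀ m n : M, T (m * n) = (T m).comp (T n))
    (hcontr : ∀ m : M, ‖T m‖ ≤ 1) {F : Filter M}
    (hF : ∀ A ∈ F, ∀ n : M, (fun m => n * m) '' A ∈ F) (x : X) :
    Tendsto (fun m => ‖T m x‖) F (𝓝 (⨅ m, ‖T m x‖)) := by
  have hbdd : BddBelow (Set.range fun m => ‖T m x‖) := ⟨0, by rintro _ ⟨m, rfl⟩; positivity⟩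
  refine tendsto_order.2 ⟨fun a ha => .of_forall fun m => ha.trans_le (ciInf_le hbdd m),
    fun b hb => ?_⟩
  obtain ⟨m₀, hm₀⟩ := exists_lt_of_ciInf_lt hb
  refine le_map_mul_left (hF · · m₀) (eventually_map.2 (.of_forall fun m => ?_))
  calc ‖T (m₀ * m) x‖ = ‖T m (T m₀ x)‖ := by rw [mul_comm, hmulT]; rfl
    _ ≤ ‖T m₀ x‖ := (T m).le_of_opNorm_le (hcontr m) _ |>.trans_eq (one_mul _)
    _ < b := hm₀

def unitaryPart {𝕜 X M : Type*} [RCLike 𝕜] [NormedAddCommGroup X] [InnerProductSpace 𝕜 X]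
    [CompleteSpace X] (T : M → X →L[𝕜] X) : Set X :=
  {x | ∀ k : M, adjoint (T k) (T k x) = x ∧ T k (adjoint (T k) x) = x}

section Semigroup

variable {𝕜 X M : Type*} [RCLike 𝕜] [NormedAddCommGroup X] [InnerProductSpace 𝕜 X]
  [CompleteSpace X] [CommSemigroup M] {T : M → X →L[𝕜] X}
  (hmulT : ∀ m n : M, T (m * n) = (T m).comp (T n)) (hcontr : ∀ m : M, ‖T m‖ ≤ 1)
  {F : Filter M} (hF : ∀ A ∈ F, ∀ n : M, (fun m => n * m) '' A ∈ F) (x : X)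

include hmulT hcontr hF

theorem tendsto_adjoint_apply_apply_sub [Nonempty M] (k : M) :
    Tendsto (fun m => adjoint (T k) (T k (T m x)) - T m x) F (𝓝 0) := by
  have hL := tendsto_norm_apply_iInf hmulT hcontr hF x
  have hbdd : BddBelow (Set.range fun m => ‖T m x‖) := ⟨0, by rintro _ ⟨m, rfl⟩; positivity⟩
  have hkL : Tendsto (fun m => ‖T k (T m x)‖) F (𝓝 (⨅ m, ‖T m x‖)) := by
    refine tendsto_of_tendsto_of_tendsto_of_le_of_le tendsto_const_nhds hL (fun m => ?_)
      (fun m => by simpa using (T k).le_of_opNorm_le (hcontr k) (T m x))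
    simpa [hmulT] using ciInf_le hbdd (k * m)
  exact tendsto_zero_of_norm_sq_le_sub (hL.pow 2) (hkL.pow 2)
    fun m => norm_adjoint_apply_apply_sub_sq_le (hcontr k) (T m x)

theorem tendsto_apply_adjoint_apply_sub [Nonempty M] (k : M) :
    Tendsto (fun m => T k (adjoint (T k) (T m x)) - T m x) F (𝓝 0) := by
  -- `F ≤ map (k * ·) F`, and `T (k * m) x = T k (T m x)` lies in the range of `T k`.
  refine tendsto_map'_iff.2 ?_ |>.mono_left (le_map_mul_left (hF · · k))
  refine squeeze_zero_norm (fun m => ?_) <|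
    tendsto_zero_iff_norm_tendsto_zero.1 (tendsto_adjoint_apply_apply_sub hmulT hcontr hF x k)
  calc ‖T k (adjoint (T k) (T (k * m) x)) - T (k * m) x‖
      = ‖T k (adjoint (T k) (T k (T m x)) - T m x)‖ := by simp [hmulT]
    _ ≤ ‖adjoint (T k) (T k (T m x)) - T m x‖ := by
      simpa only [one_mul] using (T k).le_of_opNorm_le (hcontr k) _

theorem mem_unitaryPart_of_tendsto_inner {l : Filter M} [l.NeBot] (hl : l ≤ F) {x₀ : X}
    (hx₀ : ∀ y, Tendsto (fun m => inner 𝕜 (T m x) y) l (𝓝 (inner 𝕜 x₀ y))) :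
    x₀ ∈ unitaryPart T := by
  have : Nonempty M := nonempty_of_neBot l
  exact fun k => ⟨eq_of_tendsto_inner_of_tendsto_apply_sub hx₀ (adjoint (T k) ∘L T k)
      ((tendsto_adjoint_apply_apply_sub hmulT hcontr hF x k).mono_left hl),
    eq_of_tendsto_inner_of_tendsto_apply_sub hx₀ (T k ∘L adjoint (T k))
      ((tendsto_apply_adjoint_apply_sub hmulT hcontr hF x k).mono_left hl)⟩

end Semigroup

theorem weak_stability_on_complement_general
    {X : Type*} [NormedAddCommGroup X] [InnerProductSpace ℂ X] [CompleteSpace X]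
    {M : Type*} [CommSemigroup M]
    (T : M → X →L[ℂ] X)
    (hmulT : ∀ m n : M, T (m * n) = (T m).comp (T n))
    (hcontr : ∀ m : M, ‖T m‖ ≤ 1)
    (F : Filter M)
    (hinv : ∀ A ∈ F, ∀ n : M,
      ((fun m => n * m) '' A ∈ F) ∧ ({m : M | m * n ∈ A} ∈ F))
    (hX₁inv : ∀ m : M,
      ∀ x ∈ {x : X | ∀ k : M, adjoint (T k) (T k x) = x ∧ T k (adjoint (T k) x) = x},
      T m x ∈ {x : X | ∀ k : M, adjoint (T k) (T k x) = x ∧ T k (adjoint (T k) x) = x} ∧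
      adjoint (T m) x ∈
        {x : X | ∀ k : M, adjoint (T k) (T k x) = x ∧ T k (adjoint (T k) x) = x})
    (x : X)
    (hx : ∀ y ∈ {x : X | ∀ k : M, adjoint (T k) (T k x) = x ∧ T k (adjoint (T k) x) = x},
      (inner ℂ x y : ℂ) = 0) :
    ∀ y : X, Tendsto (fun m => (inner ℂ (T m x) y : ℂ)) F (𝓝 0) := by
  intro y
  refine (tendsto_iff_ultrafilter _ _ _).2 fun G hG => ?_
  obtain ⟨x₀, hx₀⟩ := exists_tendsto_inner_of_norm_le ℂ G (u := fun m => T m x)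
    fun m => by simpa only [one_mul] using (T m).le_of_opNorm_le (hcontr m) x
  have hx₀_mem : x₀ ∈ unitaryPart T :=
    mem_unitaryPart_of_tendsto_inner hmulT hcontr (fun A hA n => (hinv A hA n).1) x hG hx₀
  have hx₀_self : inner ℂ x₀ x₀ = 0 := by
    refine tendsto_nhds_unique (hx₀ x₀) (tendsto_const_nhds.congr fun m => ?_)
    rw [← adjoint_inner_right, hx _ (hX₁inv m x₀ hx₀_mem).2]
  simpa [inner_self_eq_zero.1 hx₀_self] using hx₀ y

/-- Weak stability on the orthogonal complement of the unitary part: if `M` is an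
abelian semigroup acting on a Hilbert space `X` by contractions `T_m`, `F` is an
invariant filter on `M`, `X₁ = {x : T_m* T_m x = T_m T_m* x = x for all m}` is
invariant under all `T_m` and `T_m*`, and `x` is orthogonal to `X₁`, then `(T_m x)`
converges weakly to `0` along `F`. -/
theorem weak_stability_on_complement
    {X : Type*} [NormedAddCommGroup X] [InnerProductSpace ℂ X] [CompleteSpace X]
    {M : Type*} [CommSemigroup M]
    (T : M → X →L[ℂ] X)
    (hmulT : ∀ m n : M, T (m * n) = (T m).comp (T n))
    (hcontr : ∀ m : M, ‖T m‖ ≤ 1)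
    (F : Filter M) [F.NeBot]
    (hinv : ∀ A ∈ F, ∀ n : M,
      ((fun m => n * m) '' A ∈ F) ∧ ({m : M | m * n ∈ A} ∈ F))
    (hX₁inv : ∀ m : M,
      ∀ x ∈ {x : X | ∀ k : M, adjoint (T k) (T k x) = x ∧ T k (adjoint (T k) x) = x},
      T m x ∈ {x : X | ∀ k : M, adjoint (T k) (T k x) = x ∧ T k (adjoint (T k) x) = x} ∧
      adjoint (T m) x ∈
        {x : X | ∀ k : M, adjoint (T k) (T k x) = x ∧ T k (adjoint (T k) x) = x})
    (x : X)
    (hx : ∀ y ∈ {x : X | ∀ k : M, adjoint (T k) (T k x) = x ∧ T k (adjoint (T k) x) = x},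
      (inner ℂ x y : ℂ) = 0) :
    ∀ y : X, Tendsto (fun m => (inner ℂ (T m x) y : ℂ)) F (𝓝 0) :=
  weak_stability_on_complement_general T hmulT hcontr F hinv hX₁inv x hx
end
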